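/- Let m and n be positive natural numbers. The real number π/lcm(m,n) is the least element of the set of strictly positive reals expressible as i·(π/m) − j·(π/n) with integers i, j; that is, IsLeast {β : ℝ | 0 < β ∧ ∃ i j : ℤ, β = i·(π/m) − j·(π/n)} (π/lcm(m,n)). (This is the achiral angular period Δβ = π/lcm(m,n) of Eq. (1).) -/
import Mathlib


open Real

theorem isLeast_pos_aligned_angle
    (m n : ℕ) (hm : 1 ≤ m) (hn : 1 ≤ n) :
    IsLeast {β : ℝ | 0 < β ∧ ∃ i j : ℤ, β = i * (π / m) - j * (π / n)}
      (π / (Nat.lcm m n : ℝ)) := by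
  have hπ := Real.pi_pos
  have hmR : (0:ℝ) < m := by exact_mod_cast hm
  have hnR : (0:ℝ) < n := by exact_mod_cast hn
  have hg : 0 < Nat.gcd m n := Nat.gcd_pos_of_pos_left n hm
  have hl : 0 < Nat.lcm m n := Nat.lcm_pos hm hn
  have hgR : (0:ℝ) < Nat.gcd m n := by exact_mod_cast hg
  have hlR : (0:ℝ) < Nat.lcm m n := by exact_mod_cast hl
  have key : (Nat.gcd m n : ℝ) * (Nat.lcm m n : ℝ) = m * n := by
    exact_mod_cast Nat.gcd_mul_lcm m n
  have hval : ∀ i j : ℤ, (i:ℝ) * (π / m) - j * (π / n)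
      = ((i * n - j * m : ℤ) : ℝ) * (π / (m * n)) := by
    intro i j
    push_cast
    field_simp
  have hlcm : π / (Nat.lcm m n : ℝ) = (Nat.gcd m n : ℝ) * (π / (m * n)) := by
    rw [← key]
    field_simp
  constructor
  · refine ⟨by positivity, Nat.gcdB m n, -(Nat.gcdA m n), ?_⟩
    rw [hval, hlcm]
    congr 1
    have hz : (Nat.gcdB m n) * (n:ℤ) - (-(Nat.gcdA m n)) * (m:ℤ) = (Nat.gcd m n : ℤ) := by
      have hbz := Nat.gcd_eq_gcd_ab m n
      linarith
    exact_mod_cast hz.symm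
  · rintro β ⟨hβpos, i, j, rfl⟩
    rw [hval] at hβpos ⊢
    rw [hlcm]
    set k : ℤ := i * n - j * m with hk
    have hppos : (0:ℝ) < π / (m * n) := by positivity
    have hkpos : 0 < k := by
      by_contra h
      push_neg at h
      have : ((k:ℝ)) ≤ 0 := by exact_mod_cast h
      nlinarith
    have hdvd : (Nat.gcd m n : ℤ) ∣ k := by
      have h1 : (Nat.gcd m n : ℤ) ∣ (m:ℤ) := Int.natCast_dvd_natCast.mpr (Nat.gcd_dvd_left m n)
      have h2 : (Nat.gcd m n : ℤ) ∣ (n:ℤ) := Int.natCast_dvd_natCast.mpr (Nat.gcd_dvd_right m n)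
      exact dvd_sub (Dvd.dvd.mul_left h2 i) (Dvd.dvd.mul_left h1 j)
    have hge : (Nat.gcd m n : ℤ) ≤ k := Int.le_of_dvd hkpos hdvd
    have hgeR : (Nat.gcd m n : ℝ) ≤ (k:ℝ) := by exact_mod_cast hge
    nlinarith
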